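/- Let n > 0, K > 0, R₀ ≥ 0, 0 ≤ ρ < 1, 0 < λ_min ≤ λ_max, and η = 2/((λ_min + λ_max)·n). Let θ : ℕ → ℝᵖ satisfy θ_{t+1} = θ_t − η·J_tᵀ·r_t, where for each t the matrix J_t ∈ M_{m×p}(ℝ) satisfies ‖J_t‖_op ≤ K·√n and the vector r_t ∈ ℝᵐ satisfies ‖r_t‖₂ ≤ R₀·ρᵗ. Then for every T ∈ ℕ, ‖θ_T − θ₀‖₂ ≤ Σ_{t=0}^{T−1} ‖θ_{t+1} − θ_t‖₂ ≤ 2·K·R₀/((λ_min + λ_max)·√n·(1 − ρ)). In particular the total parameter movement is O(n^{−1/2}) in the width n. -/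

import Mathlib

/-!
Each gradient step has length `η ‖J_tᵀ r_t‖ ≤ η K √n R₀ ρᵗ`, because the transpose has the same
operator norm. Summing the geometric series and using `η √n = 2 / ((λmin + λmax) √n)` bounds the
total path length, which dominates the displacement by the triangle inequality.
-/

open Matrix

/-- Frobenius norm of a real matrix. -/
noncomputable def frobNorm {m p : ℕ} (A : Matrix (Fin m) (Fin p) ℝ) : ℝ :=
  Real.sqrt (∑ i, ∑ j, (A i j) ^ 2)

/-- ℓ²→ℓ² operator norm of a real matrix. -/
noncomputable def opNorm {m p : ℕ} (A : Matrix (Fin m) (Fin p) ℝ) : ℝ :=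
  ‖LinearMap.toContinuousLinearMap (Matrix.toEuclideanLin A)‖

/-- Euclidean (ℓ²) norm of a vector in ℝᵖ. -/
noncomputable def eNorm {p : ℕ} (x : Fin p → ℝ) : ℝ :=
  Real.sqrt (∑ i, (x i) ^ 2)

open Finset
open scoped Matrix.Norms.L2Operator

lemma eNorm_eq_norm_toLp {p : ℕ} (x : Fin p → ℝ) : eNorm x = ‖WithLp.toLp 2 x‖ := by
  simp only [eNorm, EuclideanSpace.norm_eq, Real.norm_eq_abs, sq_abs]

lemma opNorm_eq_l2_opNorm {m p : ℕ} (A : Matrix (Fin m) (Fin p) ℝ) : opNorm A = ‖A‖ := rfl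

lemma eNorm_nonneg {p : ℕ} (x : Fin p → ℝ) : 0 ≤ eNorm x := Real.sqrt_nonneg _

lemma eNorm_neg_smul {p : ℕ} {c : ℝ} (hc : 0 ≤ c) (x : Fin p → ℝ) :
    eNorm (-(c • x)) = c * eNorm x := by
  rw [eNorm_eq_norm_toLp, eNorm_eq_norm_toLp, WithLp.toLp_neg, WithLp.toLp_smul, norm_neg,
    norm_smul, Real.norm_of_nonneg hc]

lemma eNorm_sub_le_sum_range {p : ℕ} (θ : ℕ → (Fin p → ℝ)) (T : ℕ) :
    eNorm (θ T - θ 0) ≤ ∑ t ∈ range T, eNorm (θ (t + 1) - θ t) := by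
  simpa only [eNorm_eq_norm_toLp, WithLp.toLp_sub, dist_eq_norm'] using
    dist_le_range_sum_dist (fun t => WithLp.toLp 2 (θ t)) T

lemma eNorm_transpose_mulVec_le {m p : ℕ} (A : Matrix (Fin m) (Fin p) ℝ) (v : Fin m → ℝ) :
    eNorm (Aᵀ *ᵥ v) ≤ opNorm A * eNorm v := by
  have h_transpose : ‖Aᵀ‖ = ‖A‖ := by
    simpa only [Matrix.conjTranspose_eq_transpose_of_trivial] using
      Matrix.l2_opNorm_conjTranspose A
  rw [eNorm_eq_norm_toLp, eNorm_eq_norm_toLp, opNorm_eq_l2_opNorm, ← h_transpose]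
  exact Matrix.l2_opNorm_mulVec Aᵀ (WithLp.toLp 2 v)

lemma sum_range_le_div_one_sub_of_le_geometric {a : ℕ → ℝ} {C ρ : ℝ} (hC : 0 ≤ C)
    (hρ₀ : 0 ≤ ρ) (hρ₁ : ρ < 1) (ha : ∀ t, a t ≤ C * ρ ^ t) (T : ℕ) :
    ∑ t ∈ range T, a t ≤ C / (1 - ρ) :=
  calc ∑ t ∈ range T, a t ≤ ∑ t ∈ range T, C * ρ ^ t := sum_le_sum fun t _ => ha t
    _ = C * ∑ t ∈ Ico 0 T, ρ ^ t := by rw [← mul_sum, range_eq_Ico]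
    _ ≤ C * (ρ ^ 0 / (1 - ρ)) := by gcongr; exact geom_sum_Ico_le_of_lt_one hρ₀ hρ₁
    _ = C / (1 - ρ) := by rw [pow_zero, mul_one_div]

/-- Total parameter movement is `O(n^{-1/2})` (Lemma 1): under the per-step gradient-descent
dynamics `θ (t+1) = θ t − η (J t)ᵀ (r t)` with `‖J t‖_op ≤ K√n`, `‖r t‖₂ ≤ R₀ ρ^t` and
`η = 2/((λmin + λmax) n)`, for every `T`,
`‖θ T − θ 0‖₂ ≤ Σ_{t<T} ‖θ (t+1) − θ t‖₂ ≤ 2 K R₀ / ((λmin + λmax) √n (1 − ρ))`. -/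
theorem stmt_9 {m p : ℕ} (n K R₀ ρ lmin lmax η : ℝ)
    (hn : 0 < n) (hK : 0 < K) (hR₀ : 0 ≤ R₀) (hρ₀ : 0 ≤ ρ) (hρ₁ : ρ < 1)
    (hmin : 0 < lmin) (hle : lmin ≤ lmax) (hη : η = 2 / ((lmin + lmax) * n))
    (θ : ℕ → (Fin p → ℝ)) (J : ℕ → Matrix (Fin m) (Fin p) ℝ) (r : ℕ → (Fin m → ℝ))
    (hθ : ∀ t, θ (t + 1) = θ t - η • (J t)ᵀ.mulVec (r t))
    (hJ : ∀ t, opNorm (J t) ≤ K * Real.sqrt n)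
    (hr : ∀ t, eNorm (r t) ≤ R₀ * ρ ^ t) :
    ∀ T : ℕ,
      eNorm (θ T - θ 0) ≤ ∑ t ∈ Finset.range T, eNorm (θ (t + 1) - θ t) ∧
      ∑ t ∈ Finset.range T, eNorm (θ (t + 1) - θ t)
        ≤ 2 * K * R₀ / ((lmin + lmax) * Real.sqrt n * (1 - ρ)) := by
  have hη₀ : 0 ≤ η := by rw [hη]; have hlmax := hmin.trans_le hle; positivity
  have hstep : ∀ t, eNorm (θ (t + 1) - θ t) ≤ η * (K * Real.sqrt n) * R₀ * ρ ^ t := fun t =>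
    calc eNorm (θ (t + 1) - θ t) = η * eNorm ((J t)ᵀ *ᵥ r t) := by
          rw [hθ t, sub_sub_cancel_left, eNorm_neg_smul hη₀]
      _ ≤ η * (opNorm (J t) * eNorm (r t)) := by gcongr; exact eNorm_transpose_mulVec_le _ _
      _ ≤ η * (K * Real.sqrt n * (R₀ * ρ ^ t)) := by
          gcongr
          exacts [eNorm_nonneg _, hJ t, hr t]
      _ = η * (K * Real.sqrt n) * R₀ * ρ ^ t := by ring
  intro T
  refine ⟨eNorm_sub_le_sum_range θ T, ?_⟩
  calc ∑ t ∈ range T, eNorm (θ (t + 1) - θ t) ≤ η * (K * Real.sqrt n) * R₀ / (1 - ρ) :=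
        sum_range_le_div_one_sub_of_le_geometric (by positivity) hρ₀ hρ₁ hstep T
    _ = 2 * K * R₀ / ((lmin + lmax) * Real.sqrt n * (1 - ρ)) := by
        have hsqrt_ne := (Real.sqrt_pos.mpr hn).ne'
        rw [hη]
        field_simp
        rw [Real.sq_sqrt hn.le]
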